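/- arXiv:2302.04976 — 2 statements merged into one kernel-verified Lean document; each statement's English description precedes it below -/
import Mathlib

section
/- Let Φ be a reduced root system with Weyl group W₀ and positive roots Φ⁺. Suppose Ψᵣ ⊆ Ψₚ are two closed subsets of Φ such that Ψᵣ is radical (Ψᵣ ∩ −Ψᵣ = ∅) and Ψₚ is parabolic (Ψₚ ∪ −Ψₚ = Φ). Then there exists w ∈ W₀ such that w(Ψᵣ) ⊆ Φ⁺ ⊆ w(Ψₚ). -/
open scoped RealInnerProductSpace
noncomputable section

attribute [local instance] Classical.propDecidable

variable {V : Type*} [NormedAddCommGroup V] [InnerProductSpace ℝ V] [FiniteDimensional ℝ V]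

/-- A (reduced, crystallographic) root system realized in a real inner product space:
finite, roots nonzero, closed under the reflections `s_α`, crystallographic, and reduced. -/
structure IsRootSystem (Φ : Set V) : Prop where
  finite : Φ.Finite
  ne_zero : ∀ α ∈ Φ, α ≠ 0
  reflect_mem : ∀ α ∈ Φ, ∀ β ∈ Φ, β - (2 * ⟪α, β⟫ / ⟪α, α⟫) • α ∈ Φ
  crystallographic : ∀ α ∈ Φ, ∀ β ∈ Φ, ∃ n : ℤ, 2 * ⟪α, β⟫ / ⟪α, α⟫ = (n : ℝ)
  reduced : ∀ α ∈ Φ, ∀ t : ℝ, t • α ∈ Φ → t = 1 ∨ t = -1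

/-- A choice of positive roots `Φp` for the root system `Φ`. -/
structure IsPositiveSystem (Φ Φp : Set V) : Prop where
  subset : Φp ⊆ Φ
  neg_xor : ∀ α ∈ Φ, (α ∈ Φp ↔ -α ∉ Φp)
  add_mem : ∀ α ∈ Φp, ∀ β ∈ Φp, α + β ∈ Φ → α + β ∈ Φp

/-- `Δ` is the set of simple roots of the positive system `Φp`: every positive root is a
sum of simple roots through a sequence of partial sums all of which are positive roots. -/
structure IsBase (Φ Φp Δ : Set V) : Prop where
  subset : Δ ⊆ Φp
  gen : ∀ α ∈ Φp, ∃ l : List V, l ≠ [] ∧ (∀ β ∈ l, β ∈ Δ) ∧ l.sum = α ∧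
    ∀ n, n < l.length → (l.take (n + 1)).sum ∈ Φp

/-- The orthogonal reflection `s_α` in the hyperplane orthogonal to `α`. -/
def sRefl (α : V) : V ≃ₗᵢ[ℝ] V := Submodule.reflection (Submodule.span ℝ {α})ᗮ

/-- The Weyl group `W₀`: the group generated by the reflections in the roots. -/
def weylGroup (Φ : Set V) : Subgroup (V ≃ₗᵢ[ℝ] V) :=
  Subgroup.closure {w | ∃ α ∈ Φ, w = sRefl α}

/-- The coroot `α^∨ = 2α/⟨α,α⟩`. -/
def coro (α : V) : V := (2 / ⟪α, α⟫) • α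

/-- The length of a Weyl group element, as the number of inversions:
`ℓ(w) = #{α ∈ Φ⁺ : wα ∈ Φ⁻}`. -/
def len (Φp : Set V) (w : V ≃ₗᵢ[ℝ] V) : ℕ := {α ∈ Φp | w α ∉ Φp}.ncard

/-- The set `W_x = {r ∈ W₀ : r(Φ⁺ \ Φ_x) ⊆ Φ⁺}`. -/
def Wx (Φ Φp Φx : Set V) : Set (V ≃ₗᵢ[ℝ] V) :=
  {r | r ∈ weylGroup Φ ∧ ∀ β ∈ Φp \ Φx, r β ∈ Φp}

/-- Irreducibility: the set cannot be split into two nonempty mutually orthogonal parts. -/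
def RootIsIrreducible (Φ : Set V) : Prop :=
  Φ.Nonempty ∧ ∀ s t : Set V, Φ = s ∪ t → (∀ a ∈ s, ∀ b ∈ t, ⟪a, b⟫ = 0) →
    s = ∅ ∨ t = ∅

/-- The `k`-value `k(a, t^μ w) = ⟨a, μ⟩ + δ_{w⁻¹a}` of the alcove `t^μ w` with respect to
the root `a`, where `δ_β = 0` if `β` is positive and `-1` otherwise. -/
def kval (Φp : Set V) (a μ : V) (w : V ≃ₗᵢ[ℝ] V) : ℝ :=
  ⟪a, μ⟫ + (if w.symm a ∈ Φp then 0 else -1)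


section AuxDev
variable {Φ Φp : Set V}

private lemma ip_self_pos {α : V} (h : α ≠ 0) : (0:ℝ) < ⟪α, α⟫ := by
  rw [real_inner_self_eq_norm_sq]
  have : 0 < ‖α‖ := norm_pos_iff.mpr h
  positivity

private lemma rs_neg_mem (hΦ : IsRootSystem Φ) {α : V} (hα : α ∈ Φ) : -α ∈ Φ := by
  have h := hΦ.reflect_mem α hα α hα
  have hne : ⟪α, α⟫ ≠ 0 := ne_of_gt (ip_self_pos (hΦ.ne_zero α hα))
  rw [show (2 * ⟪α, α⟫ / ⟪α, α⟫ : ℝ) = 2 by field_simp] at h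
  rw [show α - (2:ℝ) • α = -α by module] at h
  exact h

private lemma sRefl_apply {α : V} (hα : α ≠ 0) (x : V) :
    sRefl α x = x - (2 * ⟪α, x⟫ / ⟪α, α⟫) • α := by
  have hKx : (Submodule.starProjection (Submodule.span ℝ {α}) x : V)
      = (⟪α, x⟫ / ((‖α‖ : ℝ) ^ 2)) • α := Submodule.starProjection_singleton ℝ x
  have hsum : (Submodule.starProjection (Submodule.span ℝ {α}) x : V)
      + (Submodule.starProjection (Submodule.span ℝ {α})ᗮ x : V) = x :=
    Submodule.starProjection_add_starProjection_orthogonal (K := Submodule.span ℝ {α}) x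
  have happ : sRefl α x
      = 2 • ((Submodule.starProjection (Submodule.span ℝ {α})ᗮ x : V)) - x :=
    Submodule.reflection_apply x
  have hproj : ((Submodule.starProjection (Submodule.span ℝ {α})ᗮ x : V))
      = x - (⟪α, x⟫ / ((‖α‖:ℝ)^2)) • α := by
    have h := eq_sub_of_add_eq' hsum
    rw [h, hKx]
  rw [happ, hproj, real_inner_self_eq_norm_sq, mul_div_assoc, two_smul ℕ]
  module

private lemma sRefl_mem (hΦ : IsRootSystem Φ) {α x : V} (hα : α ∈ Φ) (hx : x ∈ Φ) :
    sRefl α x ∈ Φ := by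
  rw [sRefl_apply (hΦ.ne_zero α hα)]
  exact hΦ.reflect_mem α hα x hx

private lemma sRefl_self (hΦ : IsRootSystem Φ) {α : V} (hα : α ∈ Φ) : sRefl α α = -α := by
  rw [sRefl_apply (hΦ.ne_zero α hα)]
  have hne : ⟪α, α⟫ ≠ 0 := ne_of_gt (ip_self_pos (hΦ.ne_zero α hα))
  rw [show (2 * ⟪α, α⟫ / ⟪α, α⟫ : ℝ) = 2 by field_simp]
  module

private lemma sRefl_invol (α x : V) : sRefl α (sRefl α x) = x := Submodule.reflection_reflection _ x

private lemma multiset_inner_sum (a : V) (m : Multiset V) :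
    ⟪a, m.sum⟫ = (m.map (fun x => (⟪a, x⟫ : ℝ))).sum := by
  induction m using Multiset.induction with
  | empty => simp
  | cons b s ih => simp [inner_add_right, ih]

private lemma exists_inner_neg {a : V} {m : Multiset V} (h : ⟪a, m.sum⟫ < 0) :
    ∃ x ∈ m, ⟪a, x⟫ < 0 := by
  by_contra hc
  push_neg at hc
  have h0 : (0:ℝ) ≤ ⟪a, m.sum⟫ := by
    rw [multiset_inner_sum]
    apply Multiset.sum_nonneg
    intro r hr
    obtain ⟨x, hx, rfl⟩ := Multiset.mem_map.mp hr
    exact hc x hx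
  linarith

private lemma exists_inner_pos {a : V} {m : Multiset V} (h : 0 < ⟪a, m.sum⟫) :
    ∃ x ∈ m, 0 < ⟪a, x⟫ := by
  by_contra hc
  push_neg at hc

  have h1 : ⟪-a, m.sum⟫ < 0 := by rw [inner_neg_left]; linarith
  obtain ⟨x, hx, hx2⟩ := exists_inner_neg h1
  rw [inner_neg_left] at hx2
  linarith [hc x hx]

private lemma add_root (hΦ : IsRootSystem Φ) {α β : V} (hα : α ∈ Φ) (hβ : β ∈ Φ)
    (hneg : ⟪α, β⟫ < 0) (hne : β ≠ -α) : α + β ∈ Φ := by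
  obtain ⟨n, hn⟩ := hΦ.crystallographic α hα β hβ
  obtain ⟨m, hm⟩ := hΦ.crystallographic β hβ α hα
  have hα0 := hΦ.ne_zero α hα
  have hβ0 := hΦ.ne_zero β hβ
  have hαα : (0:ℝ) < ⟪α, α⟫ := ip_self_pos hα0
  have hββ : (0:ℝ) < ⟪β, β⟫ := ip_self_pos hβ0
  have hβα : ⟪β, α⟫ < 0 := by rwa [real_inner_comm]
  have hnR : (n:ℝ) < 0 := by
    rw [← hn]; exact div_neg_of_neg_of_pos (by linarith) hαα
  rw [real_inner_comm α β] at hm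
  have hmR : (m:ℝ) < 0 := by
    rw [← hm]; exact div_neg_of_neg_of_pos (by linarith) hββ
  have hnZ : n ≤ -1 := by
    have : n < 0 := by exact_mod_cast hnR
    omega
  have hmZ : m ≤ -1 := by
    have : m < 0 := by exact_mod_cast hmR
    omega
  -- strict Cauchy-Schwarz
  have hcs : ⟪-α, β⟫ < ‖-α‖ * ‖β‖ := by
    rw [inner_lt_norm_mul_iff_real]
    intro hcontra
    -- ‖β‖ • -α = ‖-α‖ • β
    have hA : 0 < ‖α‖ := norm_pos_iff.mpr hα0
    have hB : 0 < ‖β‖ := norm_pos_iff.mpr hβ0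
    have hAne : ‖α‖ ≠ 0 := ne_of_gt hA
    have h5 : -(‖β‖ • α) = ‖α‖ • β := by
      rw [← smul_neg]; rwa [norm_neg] at hcontra
    have hβeq : β = (-(‖β‖ / ‖α‖)) • α := by
      apply smul_right_injective V hAne
      show ‖α‖ • β = ‖α‖ • (-(‖β‖ / ‖α‖)) • α
      rw [← h5, smul_smul]
      rw [show ‖α‖ * -(‖β‖ / ‖α‖) = -‖β‖ by field_simp [mul_comm]]
      rw [neg_smul]
    have := hΦ.reduced α hα _ (hβeq ▸ hβ)
    rcases this with h1 | h1
    · nlinarith [div_pos hB hA]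
    · apply hne
      have h2 : ‖β‖ / ‖α‖ = 1 := by linarith
      rw [hβeq, h2]
      simp
  rw [inner_neg_left, norm_neg] at hcs
  have hcs2 : ⟪α, β⟫ ^ 2 < ⟪α, α⟫ * ⟪β, β⟫ := by
    rw [real_inner_self_eq_norm_sq, real_inner_self_eq_norm_sq]
    nlinarith [norm_pos_iff.mpr hα0, norm_pos_iff.mpr hβ0]
  have hprod : (n:ℝ) * (m:ℝ) < 4 := by
    rw [← hn, ← hm]
    rw [div_mul_div_comm]
    rw [div_lt_iff₀ (by positivity)]
    nlinarith [hcs2]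
  have hnm : n * m < 4 := by exact_mod_cast hprod
  have hcase : n = -1 ∨ m = -1 := by
    by_contra hcon
    push_neg at hcon
    have h1 : n ≤ -2 := by omega
    have h2 : m ≤ -2 := by omega
    nlinarith
  rcases hcase with h | h
  · have := hΦ.reflect_mem α hα β hβ
    rw [hn, h] at this
    simpa [sub_neg_eq_add, add_comm] using this
  · have := hΦ.reflect_mem β hβ α hα
    rw [real_inner_comm α β] at this
    rw [hm, h] at this
    simpa [sub_neg_eq_add, add_comm] using this


private lemma zero_sum (hΦ : IsRootSystem Φ) {Ψ : Set V} (hΨΦ : Ψ ⊆ Φ)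
    (hclosed : ∀ a ∈ Ψ, ∀ b ∈ Ψ, a + b ∈ Φ → a + b ∈ Ψ)
    (hrad : ∀ a, a ∈ Ψ → -a ∈ Ψ → False) :
    ∀ m : Multiset V, (∀ x ∈ m, x ∈ Ψ) → m ≠ 0 → m.sum ≠ 0 := by
  suffices H : ∀ n : ℕ, ∀ m : Multiset V, Multiset.card m = n →
      (∀ x ∈ m, x ∈ Ψ) → m ≠ 0 → m.sum ≠ 0 by
    exact fun m hm hne => H (Multiset.card m) m rfl hm hne
  intro n
  induction n using Nat.strong_induction_on with
  | _ n ih =>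
  intro m hcard hmem hne hsum
  obtain ⟨a, ha⟩ := Multiset.exists_mem_of_ne_zero hne
  obtain ⟨m', rfl⟩ := Multiset.exists_cons_of_mem ha
  have haΨ := hmem a (Multiset.mem_cons_self a m')
  have haΦ := hΨΦ haΨ
  have ha0 := hΦ.ne_zero a haΦ
  rw [Multiset.sum_cons] at hsum
  have hm'sum : m'.sum = -a := by
    rw [add_comm] at hsum
    exact eq_neg_of_add_eq_zero_left hsum
  have hinner : ⟪a, m'.sum⟫ < 0 := by
    rw [hm'sum, inner_neg_right]
    have := ip_self_pos ha0
    linarith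
  obtain ⟨b, hbm, hab⟩ := exists_inner_neg hinner
  have hbΨ := hmem b (Multiset.mem_cons_of_mem hbm)
  have hbne : b ≠ -a := by
    rintro rfl
    exact hrad a haΨ hbΨ
  have habΦ : a + b ∈ Φ := add_root hΦ haΦ (hΨΦ hbΨ) hab hbne
  have habΨ : a + b ∈ Ψ := hclosed a haΨ b hbΨ habΦ
  obtain ⟨m'', rfl⟩ := Multiset.exists_cons_of_mem hbm
  refine ih (Multiset.card ((a + b) ::ₘ m'')) ?_ _ rfl ?_ ?_ ?_
  · simp only [Multiset.card_cons] at hcard ⊢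
    omega
  · intro x hx
    rcases Multiset.mem_cons.mp hx with h | h
    · exact h ▸ habΨ
    · exact hmem x (Multiset.mem_cons_of_mem (Multiset.mem_cons_of_mem h))
  · exact Multiset.cons_ne_zero
  · rw [Multiset.sum_cons]
    rw [Multiset.sum_cons] at hsum
    rw [← hsum]
    abel

private lemma sum_mem_closed (hΦ : IsRootSystem Φ) {C : Set V} (hCΦ : C ⊆ Φ)
    (hclosed : ∀ a ∈ C, ∀ b ∈ C, a + b ∈ Φ → a + b ∈ C) :
    ∀ m : Multiset V, (∀ x ∈ m, x ∈ C) → m ≠ 0 → m.sum ∈ Φ → m.sum ∈ C := by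
  suffices H : ∀ n : ℕ, ∀ m : Multiset V, Multiset.card m = n →
      (∀ x ∈ m, x ∈ C) → m ≠ 0 → m.sum ∈ Φ → m.sum ∈ C by
    exact fun m => H (Multiset.card m) m rfl
  intro n
  induction n using Nat.strong_induction_on with
  | _ n ih =>
  intro m hcard hmem hne hsumΦ
  have hγ0 : m.sum ≠ 0 := hΦ.ne_zero _ hsumΦ
  have hpos : 0 < ⟪m.sum, m.sum⟫ := ip_self_pos hγ0
  obtain ⟨b, hbm, hb⟩ := exists_inner_pos hpos
  obtain ⟨m', rfl⟩ := Multiset.exists_cons_of_mem hbm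
  rw [Multiset.sum_cons] at hsumΦ hγ0 hpos hb ⊢
  by_cases hm0 : m'.sum = 0
  · rw [hm0, add_zero]
    exact hmem b (Multiset.mem_cons_self b m')
  · have hbC := hmem b (Multiset.mem_cons_self b m')
    have hbΦ := hCΦ hbC
    have hγΦ := hsumΦ
    have hγb : b + m'.sum ≠ b := fun h => hm0 (by
      have := h
      rwa [add_eq_left] at this)
    have hrest : m'.sum ∈ Φ := by
      have hinner : ⟪-b, b + m'.sum⟫ < 0 := by
        rw [inner_neg_left, real_inner_comm]
        linarith
      have hne2 : b + m'.sum ≠ -(-b) := by rwa [neg_neg]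
      have := add_root hΦ (rs_neg_mem hΦ hbΦ) hγΦ hinner hne2
      rwa [show -b + (b + m'.sum) = m'.sum by abel] at this
    have hm'ne : m' ≠ 0 := by
      rintro rfl
      simp at hm0
    have hm'C : m'.sum ∈ C := by
      refine ih (Multiset.card m') ?_ m' rfl ?_ hm'ne hrest
      · simp only [Multiset.card_cons] at hcard
        omega
      · exact fun x hx => hmem x (Multiset.mem_cons_of_mem hx)
    exact hclosed b hbC m'.sum hm'C hsumΦ

private lemma neg_mem_zero_sum (hΦ : IsRootSystem Φ) {P : Set V} (hPΦ : P ⊆ Φ)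
    (hclosed : ∀ a ∈ P, ∀ b ∈ P, a + b ∈ Φ → a + b ∈ P) :
    ∀ m : Multiset V, (∀ x ∈ m, x ∈ P) → m.sum = 0 → ∀ x ∈ m, -x ∈ P := by
  suffices H : ∀ n : ℕ, ∀ m : Multiset V, Multiset.card m = n →
      (∀ x ∈ m, x ∈ P) → m.sum = 0 → ∀ x ∈ m, -x ∈ P by
    exact fun m => H (Multiset.card m) m rfl
  intro n
  induction n using Nat.strong_induction_on with
  | _ n ih =>
  intro m hcard hmem hsum x hxm
  obtain ⟨m', rfl⟩ := Multiset.exists_cons_of_mem hxm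
  have hxP := hmem x (Multiset.mem_cons_self x m')
  have hxΦ := hPΦ hxP
  rw [Multiset.sum_cons] at hsum
  by_cases hm0 : m' = 0
  · subst hm0
    simp at hsum
    exact absurd hsum (hΦ.ne_zero x hxΦ)
  · have hm'sum : m'.sum = -x := by
      rw [add_comm] at hsum
      exact eq_neg_of_add_eq_zero_left hsum
    have hinner : ⟪x, m'.sum⟫ < 0 := by
      rw [hm'sum, inner_neg_right]
      linarith [ip_self_pos (hΦ.ne_zero x hxΦ)]
    obtain ⟨y, hym, hxy⟩ := exists_inner_neg hinner
    have hyP := hmem y (Multiset.mem_cons_of_mem hym)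
    by_cases hyx : y = -x
    · exact hyx ▸ hyP
    · have hzΦ : x + y ∈ Φ := add_root hΦ hxΦ (hPΦ hyP) hxy hyx
      have hzP : x + y ∈ P := hclosed x hxP y hyP hzΦ
      obtain ⟨m'', rfl⟩ := Multiset.exists_cons_of_mem hym
      have hznegP : -(x + y) ∈ P := by
        refine ih (Multiset.card ((x + y) ::ₘ m'')) ?_ _ rfl ?_ ?_ (x + y)
          (Multiset.mem_cons_self _ _)
        · simp only [Multiset.card_cons] at hcard ⊢
          omega
        · intro z hz
          rcases Multiset.mem_cons.mp hz with h | h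
          · exact h ▸ hzP
          · exact hmem z (Multiset.mem_cons_of_mem (Multiset.mem_cons_of_mem h))
        · rw [Multiset.sum_cons]
          rw [Multiset.sum_cons] at hsum
          rw [← hsum]
          abel
      have hfin : -(x + y) + y ∈ Φ := by
        rw [show -(x + y) + y = -x by abel]
        exact rs_neg_mem hΦ hxΦ
      have := hclosed _ hznegP y hyP hfin
      rwa [show -(x + y) + y = -x by abel] at this

private lemma pos_induction (hΦ : IsRootSystem Φ) (hpos : IsPositiveSystem Φ Φp)
    (P : V → Prop)
    (hsimple : ∀ β ∈ Φp, (¬ ∃ γ ∈ Φp, ∃ δ ∈ Φp, γ + δ = β) → P β)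
    (hstep : ∀ β ∈ Φp, ∀ γ ∈ Φp, ∀ δ ∈ Φp, γ + δ = β → P γ → P δ → P β) :
    ∀ β ∈ Φp, P β := by
  have hradp : ∀ a, a ∈ Φp → -a ∈ Φp → False := fun a ha hna =>
    ((hpos.neg_xor a (hpos.subset ha)).mp ha) hna
  have hzs := zero_sum hΦ hpos.subset hpos.add_mem hradp
  haveI : Finite ↥Φp := (hΦ.finite.subset hpos.subset).to_subtype
  set q : ↥Φp → ↥Φp → Prop := fun a b => ∃ δ ∈ Φp, (a : V) + δ = (b : V) with hq
  have htrans : ∀ a b : ↥Φp, Relation.TransGen q a b →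
      ∃ m : Multiset V, m ≠ 0 ∧ (∀ x ∈ m, x ∈ Φp) ∧ (a : V) + m.sum = (b : V) := by
    intro a b h
    induction h with
    | single h =>
      obtain ⟨δ, hδ, hsum⟩ := h
      exact ⟨{δ}, by simp, by simpa using hδ, by simpa using hsum⟩
    | tail _ h ih =>
      obtain ⟨m, hm0, hmmem, hmsum⟩ := ih
      obtain ⟨δ, hδ, hsum⟩ := h
      refine ⟨δ ::ₘ m, Multiset.cons_ne_zero, ?_, ?_⟩
      · intro x hx
        rcases Multiset.mem_cons.mp hx with h | h
        · exact h ▸ hδ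
        · exact hmmem x h
      · rw [Multiset.sum_cons, ← hsum, ← hmsum]
        abel
  haveI : IsTrans ↥Φp (Relation.TransGen q) := inferInstance
  haveI : IsIrrefl ↥Φp (Relation.TransGen q) := by
    constructor
    intro a ha
    obtain ⟨m, hm0, hmmem, hmsum⟩ := htrans a a ha
    have : m.sum = 0 := by
      have := hmsum
      rwa [add_eq_left] at this
    exact hzs m hmmem hm0 this
  have hwfT : WellFounded (Relation.TransGen q) :=
    Finite.wellFounded_of_trans_of_irrefl _
  have hwf : WellFounded q := Subrelation.wf (fun h => Relation.TransGen.single h) hwfT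
  intro β hβ
  have key : ∀ b : ↥Φp, P (b : V) := by
    intro b
    induction b using hwf.induction with
    | _ c ihc =>
    by_cases hdec : ∃ γ ∈ Φp, ∃ δ ∈ Φp, γ + δ = (c : V)
    · obtain ⟨γ, hγ, δ, hδ, hsum⟩ := hdec
      have hPγ : P γ := ihc ⟨γ, hγ⟩ ⟨δ, hδ, hsum⟩
      have hPδ : P δ := ihc ⟨δ, hδ⟩ ⟨γ, hγ, by rw [add_comm]; exact hsum⟩
      exact hstep (c : V) c.2 γ hγ δ hδ hsum hPγ hPδ
    · exact hsimple (c : V) c.2 hdec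
  exact key ⟨β, hβ⟩

private lemma decomp_simples (hΦ : IsRootSystem Φ) (hpos : IsPositiveSystem Φ Φp) :
    ∀ β ∈ Φp, ∃ m : Multiset V, m ≠ 0 ∧
      (∀ x ∈ m, x ∈ Φp ∧ ¬ ∃ γ ∈ Φp, ∃ δ ∈ Φp, γ + δ = x) ∧ m.sum = β := by
  refine pos_induction hΦ hpos _ ?_ ?_
  · intro β hβ hs
    refine ⟨{β}, by simp, ?_, by simp⟩
    intro x hx
    rw [Multiset.mem_singleton] at hx
    exact hx ▸ ⟨hβ, hs⟩
  · rintro β hβ γ hγ δ hδ hsum ⟨m1, hm10, hm1mem, hm1sum⟩ ⟨m2, hm20, hm2mem, hm2sum⟩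
    refine ⟨m1 + m2, ?_, ?_, ?_⟩
    · intro h
      apply hm10
      have hc := congrArg Multiset.card h
      simp only [Multiset.card_add, Multiset.card_zero] at hc
      exact Multiset.card_eq_zero.mp (by omega)
    · intro x hx
      rcases Multiset.mem_add.mp hx with h | h
      · exact hm1mem x h
      · exact hm2mem x h
    · rw [Multiset.sum_add, hm1sum, hm2sum, hsum]


private lemma simple_reflect_mem (hΦ : IsRootSystem Φ) (hpos : IsPositiveSystem Φ Φp)
    {α β : V} (hαp : α ∈ Φp) (hαs : ¬ ∃ γ ∈ Φp, ∃ δ ∈ Φp, γ + δ = α)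
    (hβp : β ∈ Φp) (hne : β ≠ α) : sRefl α β ∈ Φp := by
  have hradp : ∀ a, a ∈ Φp → -a ∈ Φp → False := fun a ha hna =>
    ((hpos.neg_xor a (hpos.subset ha)).mp ha) hna
  have hzs := zero_sum hΦ hpos.subset hpos.add_mem hradp
  have hαΦ := hpos.subset hαp
  have hβΦ := hpos.subset hβp
  have hα0 := hΦ.ne_zero α hαΦ
  by_contra hcon
  have hsβΦ : sRefl α β ∈ Φ := sRefl_mem hΦ hαΦ hβΦ
  have hnegs : -(sRefl α β) ∈ Φp := by
    by_contra h2
    exact hcon ((hpos.neg_xor _ hsβΦ).mpr h2)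
  obtain ⟨n, hn⟩ := hΦ.crystallographic α hαΦ β hβΦ
  have hsβ : sRefl α β = β - (n : ℝ) • α := by
    rw [sRefl_apply hα0, hn]
  obtain ⟨mβ, hmβ0, hmβmem, hmβsum⟩ := decomp_simples hΦ hpos β hβp
  obtain ⟨mγ, hmγ0, hmγmem, hmγsum⟩ := decomp_simples hΦ hpos _ hnegs
  set M : Multiset V := mβ + mγ with hM
  have hMsum : M.sum = (n : ℝ) • α := by
    rw [hM, Multiset.sum_add, hmβsum, hmγsum, hsβ]
    abel
  have hMmem : ∀ x ∈ M, x ∈ Φp ∧ ¬ ∃ γ ∈ Φp, ∃ δ ∈ Φp, γ + δ = x := by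
    intro x hx
    rcases Multiset.mem_add.mp hx with h | h
    · exact hmβmem x h
    · exact hmγmem x h
  set c : ℕ := M.count α with hcdef
  set M' : Multiset V := M.filter (fun x => ¬ x = α) with hM'
  have hsplit : Multiset.filter (fun x => x = α) M + M' = M :=
    Multiset.filter_add_not _ M
  have hfeq : Multiset.filter (fun x => x = α) M = Multiset.replicate c α := by
    rw [hcdef]
    exact Multiset.filter_eq' M α
  have hM'sum : M'.sum = ((n : ℝ) - (c : ℝ)) • α := by
    have h1 : (Multiset.filter (fun x => x = α) M).sum = c • α := by
      rw [hfeq, Multiset.sum_replicate]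
    have h2 : (Multiset.filter (fun x => x = α) M).sum + M'.sum = (n : ℝ) • α := by
      rw [← Multiset.sum_add, hsplit, hMsum]
    rw [h1] at h2
    have h3 : M'.sum = (n : ℝ) • α - c • α := by rw [← h2]; abel
    rw [h3, ← Nat.cast_smul_eq_nsmul ℝ, sub_smul]
  have hM'mem : ∀ x ∈ M', x ∈ Φp ∧ x ≠ α ∧ (¬ ∃ γ ∈ Φp, ∃ δ ∈ Φp, γ + δ = x) := by
    intro x hx
    rw [hM', Multiset.mem_filter] at hx
    exact ⟨(hMmem x hx.1).1, hx.2, (hMmem x hx.1).2⟩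
  set k : ℤ := n - (c : ℤ) with hk
  have hkR : ((n : ℝ) - (c : ℝ)) = (k : ℝ) := by rw [hk]; push_cast; ring
  rcases lt_trichotomy k 0 with hkneg | hkzero | hkpos
  · -- k < 0 : contradiction with zero_sum on Φp
    have h4 : (((-k).toNat : ℕ) : ℝ) = -(k : ℝ) := by
      exact_mod_cast Int.toNat_of_nonneg (by omega : (0:ℤ) ≤ -k)
    have hsum0 : (M' + Multiset.replicate (-k).toNat α).sum = 0 := by
      rw [Multiset.sum_add, Multiset.sum_replicate, hM'sum, hkR,
        ← Nat.cast_smul_eq_nsmul ℝ, h4, ← add_smul]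
      simp
    have hmem0 : ∀ x ∈ M' + Multiset.replicate (-k).toNat α, x ∈ Φp := by
      intro x hx
      rcases Multiset.mem_add.mp hx with h | h
      · exact (hM'mem x h).1
      · exact (Multiset.eq_of_mem_replicate h) ▸ hαp
    have hne0 : M' + Multiset.replicate (-k).toNat α ≠ 0 := by
      intro h
      have hcard := congrArg Multiset.card h
      simp only [Multiset.card_add, Multiset.card_replicate, Multiset.card_zero] at hcard
      omega
    exact hzs _ hmem0 hne0 hsum0
  · -- k = 0 : β is a multiple of α, so β = α, contradiction
    have hM'0 : M' = 0 := by
      by_contra h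
      refine hzs M' (fun x hx => (hM'mem x hx).1) h ?_
      rw [hM'sum, hkR, hkzero]
      simp
    have hMrep : M = Multiset.replicate c α := by
      rw [← hsplit, hM'0, add_zero, hfeq]
    have hallα : ∀ x ∈ mβ, x = α := by
      intro x hx
      have hxM : x ∈ M := Multiset.mem_add.mpr (Or.inl hx)
      rw [hMrep] at hxM
      exact Multiset.eq_of_mem_replicate hxM
    have hβeq : β = ((Multiset.card mβ : ℕ) : ℝ) • α := by
      have hrep : mβ = Multiset.replicate (Multiset.card mβ) α :=
        (Multiset.eq_replicate_card).mpr hallα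
      rw [← hmβsum]
      conv_lhs => rw [hrep]
      rw [Multiset.sum_replicate, Nat.cast_smul_eq_nsmul]
    have hcardpos : 0 < Multiset.card mβ := Multiset.card_pos.mpr hmβ0
    rcases hΦ.reduced α hαΦ _ (hβeq ▸ hβΦ) with h1 | h1
    · apply hne
      rw [hβeq, h1, one_smul]
    · have : (0:ℝ) < ((Multiset.card mβ : ℕ) : ℝ) := by exact_mod_cast hcardpos
      linarith [h1]
  · -- k > 0 : find δ ∈ M' with positive inner product with α
    have hkRpos : (0:ℝ) < (k : ℝ) := by exact_mod_cast hkpos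
    have hip : 0 < ⟪α, M'.sum⟫ := by
      rw [hM'sum, hkR, real_inner_smul_right]
      exact mul_pos hkRpos (ip_self_pos hα0)
    obtain ⟨δ, hδM', hδip⟩ := exists_inner_pos hip
    obtain ⟨hδp, hδα, hδs⟩ := hM'mem δ hδM'
    have hδΦ := hpos.subset hδp
    have h2 : -α + δ ∈ Φ := by
      refine add_root hΦ (rs_neg_mem hΦ hαΦ) hδΦ ?_ ?_
      · rw [inner_neg_left]
        linarith
      · intro h
        exact hδα (by rw [h, neg_neg])
    have hsub : δ - α ∈ Φ := by
      rw [sub_eq_neg_add]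
      exact h2
    by_cases h3 : δ - α ∈ Φp
    · exact hδs ⟨α, hαp, δ - α, h3, by abel⟩
    · have h5 : -(δ - α) ∈ Φp := by
        by_contra h6
        exact h3 ((hpos.neg_xor _ hsub).mpr h6)
      rw [neg_sub] at h5
      exact hαs ⟨δ, hδp, α - δ, h5, by abel⟩


private lemma conj_pos (hΦ : IsRootSystem Φ) (hpos : IsPositiveSystem Φ Φp) :
    ∀ n : ℕ, ∀ T : Set V, T ⊆ Φ → (∀ a ∈ Φ, a ∈ T ∨ -a ∈ T) →
      (∀ a, a ∈ T → -a ∈ T → False) →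
      (∀ a ∈ T, ∀ b ∈ T, a + b ∈ Φ → a + b ∈ T) → (T \ Φp).ncard = n →
      ∃ w ∈ weylGroup Φ, ⇑w '' T = Φp := by
  intro n
  induction n using Nat.strong_induction_on with
  | _ n ih =>
  intro T hTΦ hTpar hTrad hTcl hcard
  by_cases hall : ∀ γ ∈ Φp, (¬ ∃ a ∈ Φp, ∃ b ∈ Φp, a + b = γ) → γ ∈ T
  · have h1 : ∀ γ ∈ Φp, γ ∈ T := by
      refine pos_induction hΦ hpos _ hall ?_
      intro β hβ γ hγ δ hδ hsum hγT hδT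
      exact hsum ▸ hTcl γ hγT δ hδT (hsum.symm ▸ hpos.subset hβ)
    have h2 : T ⊆ Φp := by
      intro x hx
      by_contra hxp
      have hxΦ := hTΦ hx
      have hnx : -x ∈ Φp := by
        by_contra h3
        exact hxp ((hpos.neg_xor x hxΦ).mpr h3)
      exact hTrad x hx (h1 _ hnx)
    refine ⟨1, one_mem _, ?_⟩
    have hone : ⇑(1 : V ≃ₗᵢ[ℝ] V) = id := rfl
    rw [hone, Set.image_id]
    exact subset_antisymm h2 (fun γ hγ => h1 γ hγ)
  · push_neg at hall
    obtain ⟨α, hαp, hαs0, hαT⟩ := hall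
    have hαs : ¬ ∃ γ ∈ Φp, ∃ δ ∈ Φp, γ + δ = α := by push_neg; exact hαs0
    have hαΦ := hpos.subset hαp
    have hnegαT : -α ∈ T := (hTpar α hαΦ).resolve_left hαT
    have hnegαp : -α ∉ Φp := fun h => (((hpos.neg_xor α hαΦ).mp hαp) h)
    have hsmem : ∀ x ∈ Φ, sRefl α x ∈ Φ := fun x hx => sRefl_mem hΦ hαΦ hx
    have hchar : ∀ y ∈ T, (sRefl α y ∉ Φp ↔ (y ∉ Φp ∧ y ≠ -α)) := by
      intro y hyT
      have hyΦ := hTΦ hyT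
      constructor
      · intro hs
        constructor
        · intro hyP
          have hyα : y ≠ α := fun h => hαT (h ▸ hyT)
          exact hs (simple_reflect_mem hΦ hpos hαp hαs hyP hyα)
        · rintro rfl
          apply hs
          rw [map_neg, sRefl_self hΦ hαΦ, neg_neg]
          exact hαp
      · rintro ⟨hyP, hyα⟩ hsP
        have h1 : -y ∈ Φp := by
          by_contra h3
          exact hyP ((hpos.neg_xor y hyΦ).mpr h3)
        have h2 : -y ≠ α := fun h => hyα (by rw [← h, neg_neg])
        have h3 : sRefl α (-y) ∈ Φp := simple_reflect_mem hΦ hpos hαp hαs h1 h2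
        rw [map_neg] at h3
        exact ((hpos.neg_xor _ (hsmem y hyΦ)).mp hsP) h3
    set T' : Set V := ⇑(sRefl α) '' T with hT'
    have hT'Φ : T' ⊆ Φ := by
      rintro x ⟨y, hy, rfl⟩
      exact hsmem y (hTΦ hy)
    have hT'par : ∀ a ∈ Φ, a ∈ T' ∨ -a ∈ T' := by
      intro a haΦ
      rcases hTpar (sRefl α a) (hsmem a haΦ) with h | h
      · exact Or.inl ⟨sRefl α a, h, sRefl_invol α a⟩
      · refine Or.inr ⟨-(sRefl α a), h, ?_⟩
        rw [map_neg, sRefl_invol]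
    have hT'rad : ∀ a, a ∈ T' → -a ∈ T' → False := by
      rintro a ⟨y, hyT, rfl⟩ ⟨z, hzT, hz⟩
      have hzy : z = -y := by
        have h1 : sRefl α z = sRefl α (-y) := by rw [map_neg, hz]
        have h2 := congrArg (⇑(sRefl α)) h1
        rwa [sRefl_invol, sRefl_invol] at h2
      exact hTrad y hyT (hzy ▸ hzT)
    have hT'cl : ∀ a ∈ T', ∀ b ∈ T', a + b ∈ Φ → a + b ∈ T' := by
      rintro a ⟨y, hyT, rfl⟩ b ⟨z, hzT, rfl⟩ hab
      rw [← map_add] at hab ⊢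
      have hyzΦ : y + z ∈ Φ := by
        have h5 := hsmem _ hab
        rwa [sRefl_invol] at h5
      exact ⟨y + z, hTcl y hyT z hzT hyzΦ, rfl⟩
    have hkey : T' \ Φp = ⇑(sRefl α) '' ((T \ Φp) \ {-α}) := by
      ext x
      simp only [Set.mem_diff, Set.mem_image, Set.mem_singleton_iff, hT']
      constructor
      · rintro ⟨⟨y, hyT, rfl⟩, hxP⟩
        obtain ⟨h1, h2⟩ := (hchar y hyT).mp hxP
        exact ⟨y, ⟨⟨hyT, h1⟩, h2⟩, rfl⟩
      · rintro ⟨y, ⟨⟨hyT, hyP⟩, hyα⟩, rfl⟩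
        exact ⟨⟨y, hyT, rfl⟩, (hchar y hyT).mpr ⟨hyP, hyα⟩⟩
    have hfinT : (T \ Φp).Finite := hΦ.finite.subset (fun x hx => hTΦ hx.1)
    have hmemdiff : -α ∈ T \ Φp := ⟨hnegαT, hnegαp⟩
    have hnpos : 0 < n := by
      rw [← hcard]
      exact (Set.ncard_pos hfinT).mpr ⟨-α, hmemdiff⟩
    have hcard' : (T' \ Φp).ncard = n - 1 := by
      rw [hkey, Set.ncard_image_of_injective _ (sRefl α).injective,
        Set.ncard_diff_singleton_of_mem hmemdiff, hcard]
    obtain ⟨w', hw'W, hw'T⟩ := ih (n - 1) (by omega) T' hT'Φ hT'par hT'rad hT'cl hcard'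
    refine ⟨w' * sRefl α, mul_mem hw'W (Subgroup.subset_closure ⟨α, hαΦ, rfl⟩), ?_⟩
    rw [LinearIsometryEquiv.coe_mul, Set.image_comp]
    exact hw'T

end AuxDev

/-- for a radical closed `Ψᵣ` inside a parabolic closed `Ψₚ`, some Weyl group
element `w` satisfies `w(Ψᵣ) ⊆ Φ⁺ ⊆ w(Ψₚ)`. -/
theorem stmt1 (Φ Φp : Set V) (hΦ : IsRootSystem Φ) (hpos : IsPositiveSystem Φ Φp)
    (Ψr Ψp : Set V) (hsub : Ψr ⊆ Ψp) (hΨp : Ψp ⊆ Φ)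
    (hclosedr : ∀ α ∈ Ψr, ∀ β ∈ Ψr, α + β ∈ Φ → α + β ∈ Ψr)
    (hclosedp : ∀ α ∈ Ψp, ∀ β ∈ Ψp, α + β ∈ Φ → α + β ∈ Ψp)
    (hradical : Ψr ∩ (-Ψr) = ∅)
    (hparabolic : Ψp ∪ (-Ψp) = Φ) :
    ∃ w ∈ weylGroup Φ, ⇑w '' Ψr ⊆ Φp ∧ Φp ⊆ ⇑w '' Ψp := by
  have hΨrΦ : Ψr ⊆ Φ := fun x hx => hΨp (hsub hx)
  have hradΨr : ∀ a, a ∈ Ψr → -a ∈ Ψr → False := by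
    intro a ha hna
    have hmem : a ∈ Ψr ∩ (-Ψr) := ⟨ha, Set.mem_neg.mpr hna⟩
    rw [hradical] at hmem
    exact Set.notMem_empty a hmem
  have hparΨp : ∀ a ∈ Φ, a ∈ Ψp ∨ -a ∈ Ψp := by
    intro a ha
    have hmem : a ∈ Ψp ∪ (-Ψp) := hparabolic ▸ ha
    rcases hmem with h | h
    · exact Or.inl h
    · exact Or.inr (Set.mem_neg.mp h)
  set 𝒮 : Set (Set V) := {T : Set V | Ψr ⊆ T ∧ T ⊆ Ψp ∧
    (∀ a ∈ T, ∀ b ∈ T, a + b ∈ Φ → a + b ∈ T) ∧ (∀ a, a ∈ T → -a ∈ T → False)} with h𝒮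
  have hfin𝒮 : 𝒮.Finite :=
    (Set.Finite.finite_subsets (hΦ.finite.subset hΨp)).subset (fun T hT => hT.2.1)
  have hne𝒮 : Ψr ∈ 𝒮 := ⟨subset_rfl, hsub, hclosedr, hradΨr⟩
  obtain ⟨T, hT𝒮, hTmax⟩ := Set.Finite.exists_maximalFor id 𝒮 hfin𝒮 ⟨Ψr, hne𝒮⟩
  obtain ⟨hΨrT, hTΨp, hTcl, hTrad⟩ := hT𝒮
  have hTΦ : T ⊆ Φ := fun x hx => hΨp (hTΨp hx)
  -- extension: any β ∈ Ψp \ T yields a vanishing combination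
  have hext : ∀ β, β ∈ Ψp → β ∉ T → ∃ p : ℕ, ∃ mσ : Multiset V,
      1 ≤ p ∧ (∀ x ∈ mσ, x ∈ T) ∧ (p • β) + mσ.sum = 0 := by
    intro β hβΨp hβT
    have hβΦ := hΨp hβΨp
    set Tβ : Set V := {γ ∈ Φ | ∃ m : Multiset V, m ≠ 0 ∧
      (∀ x ∈ m, x ∈ T ∨ x = β) ∧ m.sum = γ} with hTβdef
    have hTsub : T ⊆ Tβ := by
      intro x hx
      refine ⟨hTΦ hx, {x}, by simp, ?_, by simp⟩
      intro y hy
      rw [Multiset.mem_singleton] at hy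
      exact Or.inl (hy ▸ hx)
    have hβTβ : β ∈ Tβ := by
      refine ⟨hβΦ, {β}, by simp, ?_, by simp⟩
      intro y hy
      rw [Multiset.mem_singleton] at hy
      exact Or.inr hy
    have hTβΨp : Tβ ⊆ Ψp := by
      rintro γ ⟨hγΦ, m, hm0, hmmem, hmsum⟩
      have hmm : ∀ x ∈ m, x ∈ Ψp := by
        intro x hx
        rcases hmmem x hx with h | h
        · exact hTΨp h
        · exact h ▸ hβΨp
      exact hmsum ▸ sum_mem_closed hΦ hΨp hclosedp m hmm hm0 (hmsum.symm ▸ hγΦ)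
    have hTβcl : ∀ a ∈ Tβ, ∀ b ∈ Tβ, a + b ∈ Φ → a + b ∈ Tβ := by
      rintro a ⟨haΦ, m1, hm10, hm1mem, hm1sum⟩ b ⟨hbΦ, m2, hm20, hm2mem, hm2sum⟩ hab
      refine ⟨hab, m1 + m2, ?_, ?_, ?_⟩
      · intro h
        apply hm10
        have hc := congrArg Multiset.card h
        simp only [Multiset.card_add, Multiset.card_zero] at hc
        exact Multiset.card_eq_zero.mp (by omega)
      · intro x hx
        rcases Multiset.mem_add.mp hx with h | h
        · exact hm1mem x h
        · exact hm2mem x h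
      · rw [Multiset.sum_add, hm1sum, hm2sum]
    have hΨrTβ : Ψr ⊆ Tβ := fun x hx => hTsub (hΨrT hx)
    have hnotrad : ∃ x, x ∈ Tβ ∧ -x ∈ Tβ := by
      by_contra h
      push_neg at h
      have hTβ𝒮 : Tβ ∈ 𝒮 := ⟨hΨrTβ, hTβΨp, hTβcl, fun a ha hna => h a ha hna⟩
      have hTeq : T = Tβ := subset_antisymm hTsub (hTmax hTβ𝒮 hTsub)
      rw [← hTeq] at hβTβ
      exact hβT hβTβ
    obtain ⟨x, hx1, hx2⟩ := hnotrad
    obtain ⟨hxΦ, m1, hm10, hm1mem, hm1sum⟩ := hx1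
    obtain ⟨hxΦ', m2, hm20, hm2mem, hm2sum⟩ := hx2
    set m : Multiset V := m1 + m2 with hmdef
    have hmmem : ∀ y ∈ m, y ∈ T ∨ y = β := by
      intro y hy
      rcases Multiset.mem_add.mp hy with h | h
      · exact hm1mem y h
      · exact hm2mem y h
    have hmsum : m.sum = 0 := by
      rw [hmdef, Multiset.sum_add, hm1sum, hm2sum]
      abel
    set p : ℕ := m.count β with hpdef
    set mσ : Multiset V := m.filter (fun y => ¬ y = β) with hmσdef
    have hsplit : m.filter (fun y => y = β) + mσ = m := Multiset.filter_add_not _ m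
    have hfeq : m.filter (fun y => y = β) = Multiset.replicate p β := by
      rw [hpdef]
      exact Multiset.filter_eq' m β
    have hσmem : ∀ y ∈ mσ, y ∈ T := by
      intro y hy
      rw [hmσdef, Multiset.mem_filter] at hy
      rcases hmmem y hy.1 with h | h
      · exact h
      · exact absurd h hy.2
    have hsum2 : (p • β) + mσ.sum = 0 := by
      rw [← hmsum, ← hsplit, Multiset.sum_add, hfeq, Multiset.sum_replicate]
    have hp1 : 1 ≤ p := by
      by_contra hp
      have hp0 : p = 0 := by omega
      have hβm : β ∉ m := Multiset.count_eq_zero.mp hp0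
      have hmT : ∀ y ∈ m, y ∈ T := by
        intro y hy
        rcases hmmem y hy with h | h
        · exact h
        · exact absurd (h ▸ hy) hβm
      have hmne : m ≠ 0 := by
        intro h
        apply hm10
        have hc := congrArg Multiset.card h
        simp only [hmdef, Multiset.card_add, Multiset.card_zero] at hc
        exact Multiset.card_eq_zero.mp (by omega)
      exact zero_sum hΦ hTΦ hTcl hTrad m hmT hmne hmsum
    exact ⟨p, mσ, hp1, hσmem, hsum2⟩
  have hnegΨp : ∀ β, β ∈ Ψp → β ∉ T → -β ∈ Ψp := by
    intro β hβΨp hβT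
    obtain ⟨p, mσ, hp1, hσmem, hsum⟩ := hext β hβΨp hβT
    have hmem : ∀ y ∈ Multiset.replicate p β + mσ, y ∈ Ψp := by
      intro y hy
      rcases Multiset.mem_add.mp hy with h | h
      · exact (Multiset.eq_of_mem_replicate h) ▸ hβΨp
      · exact hTΨp (hσmem y h)
    have hsum' : (Multiset.replicate p β + mσ).sum = 0 := by
      rw [Multiset.sum_add, Multiset.sum_replicate]
      exact hsum
    exact neg_mem_zero_sum hΦ hΨp hclosedp _ hmem hsum' β
      (Multiset.mem_add.mpr (Or.inl (Multiset.mem_replicate.mpr ⟨by omega, rfl⟩)))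
  have hTpar : ∀ a ∈ Φ, a ∈ T ∨ -a ∈ T := by
    intro a haΦ
    by_contra hcon
    push_neg at hcon
    obtain ⟨haT, hnaT⟩ := hcon
    have hb : ∃ b, b ∈ Ψp ∧ b ∉ T ∧ -b ∉ T ∧ b ∈ Φ := by
      rcases hparΨp a haΦ with h | h
      · exact ⟨a, h, haT, hnaT, haΦ⟩
      · exact ⟨-a, h, hnaT, by rwa [neg_neg], rs_neg_mem hΦ haΦ⟩
    obtain ⟨b, hbΨp, hbT, hnbT, hbΦ⟩ := hb
    obtain ⟨p, mσ, hp1, hσmem, hsump⟩ := hext b hbΨp hbT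
    have hnbΨp : -b ∈ Ψp := hnegΨp b hbΨp hbT
    obtain ⟨q, mσ', hq1, hσ'mem, hsumq⟩ := hext (-b) hnbΨp hnbT
    have hσsum : mσ.sum = -(p • b) := by
      refine eq_neg_of_add_eq_zero_left ?_
      rw [add_comm]
      exact hsump
    have hσ'sum : mσ'.sum = q • b := by
      have h1 : mσ'.sum = -(q • -b) := by
        refine eq_neg_of_add_eq_zero_left ?_
        rw [add_comm]
        exact hsumq
      rw [h1, smul_neg, neg_neg]
    have hMsum : (q • mσ + p • mσ').sum = 0 := by
      rw [Multiset.sum_add, Multiset.sum_nsmul, Multiset.sum_nsmul, hσsum, hσ'sum,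
        smul_neg, smul_smul, smul_smul, Nat.mul_comm q p]
      exact neg_add_cancel _
    have hMmem : ∀ y ∈ q • mσ + p • mσ', y ∈ T := by
      intro y hy
      rcases Multiset.mem_add.mp hy with h | h
      · exact hσmem y (Multiset.mem_nsmul.mp h).2
      · exact hσ'mem y (Multiset.mem_nsmul.mp h).2
    have hMne : q • mσ + p • mσ' ≠ 0 := by
      intro h
      have hc := congrArg Multiset.card h
      simp only [Multiset.card_add, Multiset.card_nsmul, Multiset.card_zero] at hc
      have h1 : q * Multiset.card mσ = 0 := by omega
      have h2 : Multiset.card mσ = 0 := by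
        rcases Nat.mul_eq_zero.mp h1 with h' | h'
        · omega
        · exact h'
      have hσ0 : mσ = 0 := Multiset.card_eq_zero.mp h2
      rw [hσ0, Multiset.sum_zero] at hσsum
      have hpb : (p : ℝ) • b = 0 := by
        rw [Nat.cast_smul_eq_nsmul]
        have := hσsum.symm
        rwa [neg_eq_zero] at this
      rcases smul_eq_zero.mp hpb with h' | h'
      · have : (1:ℝ) ≤ (p:ℝ) := by exact_mod_cast hp1
        rw [h'] at this
        linarith
      · exact hΦ.ne_zero b hbΦ h'
    exact zero_sum hΦ hTΦ hTcl hTrad _ hMmem hMne hMsum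
  obtain ⟨w, hwW, hwT⟩ := conj_pos hΦ hpos (T \ Φp).ncard T hTΦ hTpar hTrad hTcl rfl
  refine ⟨w, hwW, ?_, ?_⟩
  · have himg : ⇑w '' Ψr ⊆ ⇑w '' T := Set.image_mono hΨrT
    rwa [hwT] at himg
  · have himg : ⇑w '' T ⊆ ⇑w '' Ψp := Set.image_mono hTΨp
    rw [hwT] at himg
    exact himg
end
end

section
/- Let Φ be an irreducible reduced root system with simple roots indexed by S, and let J ⊊ S be a proper subset. If μ is a dominant element of the rational span Q^∨_{J,ℚ} of the simple coroots {α_j^∨ : j ∈ J}, then μ = 0. -/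
open scoped RealInnerProductSpace
noncomputable section

attribute [local instance] Classical.propDecidable

variable {V : Type*} [NormedAddCommGroup V] [InnerProductSpace ℝ V] [FiniteDimensional ℝ V]

set_option linter.unusedSectionVars false

section Aux
variable {ι : Type*} [Fintype ι] {Φ Φp : Set V} {α : ι → V}

lemma inner_self_pos' {x : V} (hx : x ≠ 0) : (0:ℝ) < ⟪x, x⟫ :=
  lt_of_le_of_ne real_inner_self_nonneg (fun h => hx (inner_self_eq_zero.mp h.symm))

lemma coords_unique (hind : LinearIndependent ℝ α) {f g : ι → ℝ}
    (h : ∑ i, f i • α i = ∑ i, g i • α i) : f = g := by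
  have h0 : ∑ i, (f i - g i) • α i = 0 := by
    simp [sub_smul, Finset.sum_sub_distrib, h]
  have h1 := Fintype.linearIndependent_iff.mp hind (fun i => f i - g i) h0
  funext i; have := h1 i; linarith

lemma sum_ite_coeff (j : ι) (t : ℝ) :
    ∑ i, (if i = j then t else 0) • α i = t • α j := by
  simp [ite_smul]

lemma list_coords {l : List V} (hl : ∀ b ∈ l, b ∈ Set.range α) :
    ∃ f : ι → ℝ, (∀ i, 0 ≤ f i) ∧ l.sum = ∑ i, f i • α i := by
  induction l with
  | nil => exact ⟨0, fun i => le_refl 0, by simp⟩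
  | cons a l ih =>
    obtain ⟨f, hf, hsum⟩ := ih (fun b hb => hl b (List.mem_cons_of_mem a hb))
    obtain ⟨j, hj⟩ := hl a List.mem_cons_self
    refine ⟨fun i => (if i = j then 1 else 0) + f i, fun i => by have := hf i; dsimp only; split <;> linarith, ?_⟩
    rw [List.sum_cons, hsum, ← hj]
    simp [add_smul, Finset.sum_add_distrib, sum_ite_coeff]

lemma pos_coords (hbase : IsBase Φ Φp (Set.range α)) {β : V} (hβ : β ∈ Φp) :
    ∃ f : ι → ℝ, (∀ i, 0 ≤ f i) ∧ β = ∑ i, f i • α i := by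
  obtain ⟨l, -, hmem, hsum, -⟩ := hbase.gen β hβ
  obtain ⟨f, hf, h⟩ := list_coords hmem
  exact ⟨f, hf, by rw [← hsum, h]⟩

lemma root_coords (hpos : IsPositiveSystem Φ Φp) (hbase : IsBase Φ Φp (Set.range α))
    {β : V} (hβ : β ∈ Φ) :
    (∃ f : ι → ℝ, (∀ i, 0 ≤ f i) ∧ β = ∑ i, f i • α i) ∨
    (∃ f : ι → ℝ, (∀ i, f i ≤ 0) ∧ β = ∑ i, f i • α i) := by
  by_cases h : β ∈ Φp
  · exact Or.inl (pos_coords hbase h)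
  · have hneg : -β ∈ Φp := by
      have := hpos.neg_xor β hβ; tauto
    obtain ⟨f, hf, hs⟩ := pos_coords hbase hneg
    refine Or.inr ⟨fun i => -f i, fun i => by simpa using hf i, ?_⟩
    have : β = -∑ i, f i • α i := by rw [← hs]; simp
    rw [this, ← Finset.sum_neg_distrib]
    simp [neg_smul]

lemma inner_nonpos (hΦ : IsRootSystem Φ) (hpos : IsPositiveSystem Φ Φp)
    (hbase : IsBase Φ Φp (Set.range α)) (hind : LinearIndependent ℝ α)
    {i j : ι} (hij : i ≠ j) : ⟪α i, α j⟫ ≤ 0 := by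
  have hmem : ∀ k, α k ∈ Φ := fun k => hpos.subset (hbase.subset ⟨k, rfl⟩)
  by_contra hcon
  push_neg at hcon
  obtain ⟨n, hn⟩ := hΦ.crystallographic (α i) (hmem i) (α j) (hmem j)
  have hii : (0:ℝ) < ⟪α i, α i⟫ := inner_self_pos' (hΦ.ne_zero _ (hmem i))
  have hnpos : (0:ℝ) < (n:ℝ) := by rw [← hn]; positivity
  have hrefl := hΦ.reflect_mem (α i) (hmem i) (α j) (hmem j)
  rw [hn] at hrefl
  set g : ι → ℝ := fun k => (if k = j then 1 else 0) + (if k = i then -(n:ℝ) else 0) with hg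
  have hsum : α j - (n:ℝ) • α i = ∑ k, g k • α k := by
    simp only [hg, add_smul, Finset.sum_add_distrib, sum_ite_coeff]
    module
  rcases root_coords hpos hbase hrefl with ⟨f, hf, he⟩ | ⟨f, hf, he⟩
  · have hfg : f = g := coords_unique hind (by rw [← he, ← hsum])
    have := hf i
    rw [hfg] at this
    simp [hg, hij] at this
    have : (n:ℝ) ≤ 0 := by exact_mod_cast this
    linarith
  · have hfg : f = g := coords_unique hind (by rw [← he, ← hsum])
    have := hf j
    rw [hfg] at this
    simp [hg, Ne.symm hij] at this
    linarith

lemma no_cross (hΦ : IsRootSystem Φ) (hpos : IsPositiveSystem Φ Φp)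
    (hbase : IsBase Φ Φp (Set.range α)) (hind : LinearIndependent ℝ α)
    (K : Set ι) (horth : ∀ i ∈ K, ∀ j ∉ K, ⟪α i, α j⟫ = 0)
    {σ : V} (hσ : σ ∈ Φp) {f : ι → ℝ} (hf0 : ∀ i, 0 ≤ f i) (hfK : ∀ i ∈ K, f i = 0)
    (hσf : σ = ∑ i, f i • α i) {g : ι} (hg : g ∈ K) (hsum : σ + α g ∈ Φp) : False := by
  have hσΦ : σ ∈ Φ := hpos.subset hσ
  have hσ0 : σ ≠ 0 := hΦ.ne_zero _ hσΦ
  have hσσ : (0:ℝ) < ⟪σ, σ⟫ := inner_self_pos' hσ0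
  -- σ is orthogonal to α g
  have hog : ⟪σ, α g⟫ = 0 := by
    rw [hσf, sum_inner]
    refine Finset.sum_eq_zero fun i _ => ?_
    by_cases hi : i ∈ K
    · simp [hfK i hi]
    · rw [real_inner_smul_left, real_inner_comm, horth g hg i hi, mul_zero]
  have hδΦ : σ + α g ∈ Φ := hpos.subset hsum
  have hrefl := hΦ.reflect_mem σ hσΦ (σ + α g) hδΦ
  have hratio : 2 * ⟪σ, σ + α g⟫ / ⟪σ, σ⟫ = 2 := by
    rw [inner_add_right, hog, add_zero]
    field_simp
  rw [hratio] at hrefl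
  have hβ' : σ + α g - (2:ℝ) • σ = α g - σ := by module
  rw [hβ'] at hrefl
  -- pick i₀ with f i₀ > 0
  have hex : ∃ i₀, 0 < f i₀ := by
    by_contra hno
    push_neg at hno
    apply hσ0
    rw [hσf]
    refine Finset.sum_eq_zero fun i _ => ?_
    have : f i = 0 := le_antisymm (hno i) (hf0 i)
    simp [this]
  obtain ⟨i₀, hi₀⟩ := hex
  have hi₀K : i₀ ∉ K := fun h => by have := hfK i₀ h; linarith
  have hi₀g : i₀ ≠ g := fun h => hi₀K (h ▸ hg)
  set G : ι → ℝ := fun k => (if k = g then 1 else 0) - f k with hG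
  have hsumG : α g - σ = ∑ k, G k • α k := by
    simp only [hG, sub_smul, Finset.sum_sub_distrib, sum_ite_coeff]
    rw [← hσf]; module
  rcases root_coords hpos hbase hrefl with ⟨h, hh, he⟩ | ⟨h, hh, he⟩
  · have hfg : h = G := coords_unique hind (by rw [← he, ← hsumG])
    have := hh i₀
    rw [hfg] at this
    simp [hG, hi₀g] at this
    linarith
  · have hfg : h = G := coords_unique hind (by rw [← he, ← hsumG])
    have := hh g
    rw [hfg] at this
    simp [hG, hfK g hg] at this
    linarith

lemma supp_dichotomy (hΦ : IsRootSystem Φ) (hpos : IsPositiveSystem Φ Φp)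
    (hbase : IsBase Φ Φp (Set.range α)) (hind : LinearIndependent ℝ α)
    (K : Set ι) (horth : ∀ i ∈ K, ∀ j ∉ K, ⟪α i, α j⟫ = 0)
    {β : V} (hβ : β ∈ Φp) :
    (∃ f : ι → ℝ, (∀ i ∉ K, f i = 0) ∧ β = ∑ i, f i • α i) ∨
    (∃ f : ι → ℝ, (∀ i ∈ K, f i = 0) ∧ β = ∑ i, f i • α i) := by
  have horth' : ∀ i ∈ Kᶜ, ∀ j ∉ Kᶜ, ⟪α i, α j⟫ = 0 := by
    intro i hi j hj
    rw [real_inner_comm]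
    exact horth j (by simpa using hj) i hi
  obtain ⟨l, hne, hmem, hsum, hpart⟩ := hbase.gen β hβ
  -- key induction on partial sums
  have key : ∀ n, n < l.length →
      (∃ f : ι → ℝ, (∀ i, 0 ≤ f i) ∧ (∀ i ∉ K, f i = 0) ∧ (l.take (n+1)).sum = ∑ i, f i • α i) ∨
      (∃ f : ι → ℝ, (∀ i, 0 ≤ f i) ∧ (∀ i ∈ K, f i = 0) ∧ (l.take (n+1)).sum = ∑ i, f i • α i) := by
    intro n
    induction n with
    | zero =>
      intro h0
      obtain ⟨a, l', rfl⟩ : ∃ a l', l = a :: l' := by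
        cases l with
        | nil => simp at h0
        | cons a l' => exact ⟨a, l', rfl⟩
      obtain ⟨j, hj⟩ := hmem a List.mem_cons_self
      have htake : ((a :: l').take 1).sum = α j := by simp [hj]
      by_cases hjK : j ∈ K
      · refine Or.inl ⟨fun i => if i = j then 1 else 0, ?_, ?_, ?_⟩
        · intro i; dsimp only; split <;> norm_num
        · intro i hi; have hne : i ≠ j := fun h => hi (h ▸ hjK); simp [hne]
        · rw [htake, sum_ite_coeff, one_smul]
      · refine Or.inr ⟨fun i => if i = j then 1 else 0, ?_, ?_, ?_⟩
        · intro i; dsimp only; split <;> norm_num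
        · intro i hi; have hne : i ≠ j := fun h => hjK (h ▸ hi); simp [hne]
        · rw [htake, sum_ite_coeff, one_smul]
    | succ n ih =>
      intro hlt
      have hn : n < l.length := Nat.lt_of_succ_lt hlt
      have hσ : (l.take (n+1)).sum ∈ Φp := hpart n hn
      have hstep : (l.take (n+1+1)).sum = (l.take (n+1)).sum + l[n+1] :=
        List.sum_take_succ l (n+1) hlt
      obtain ⟨j, hj⟩ := hmem l[n+1] (List.getElem_mem hlt)
      have hδ : (l.take (n+1)).sum + α j ∈ Φp := by
        rw [hj, ← hstep]; exact hpart (n+1) hlt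
      rcases ih hn with ⟨f, hf0, hfs, hfe⟩ | ⟨f, hf0, hfs, hfe⟩
      · by_cases hjK : j ∈ K
        · refine Or.inl ⟨fun i => f i + (if i = j then 1 else 0), ?_, ?_, ?_⟩
          · intro i; have := hf0 i; dsimp only; split <;> linarith
          · intro i hi; have hne : i ≠ j := fun h => hi (h ▸ hjK); simp [hfs i hi, hne]
          · rw [hstep, ← hj, hfe]
            simp [add_smul, Finset.sum_add_distrib, sum_ite_coeff]
        · exact absurd (no_cross hΦ hpos hbase hind Kᶜ horth' hσ hf0
            (fun i hi => hfs i (by simpa using hi)) hfe (by simpa using hjK) hδ) id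
      · by_cases hjK : j ∈ K
        · exact absurd (no_cross hΦ hpos hbase hind K horth hσ hf0 hfs hfe hjK hδ) id
        · refine Or.inr ⟨fun i => f i + (if i = j then 1 else 0), ?_, ?_, ?_⟩
          · intro i; have := hf0 i; dsimp only; split <;> linarith
          · intro i hi; have hne : i ≠ j := fun h => hjK (h ▸ hi); simp [hfs i hi, hne]
          · rw [hstep, ← hj, hfe]
            simp [add_smul, Finset.sum_add_distrib, sum_ite_coeff]
  have hlen : l.length - 1 < l.length := by
    have : 0 < l.length := List.length_pos_iff.mpr hne
    omega
  have hfull : (l.take (l.length - 1 + 1)).sum = β := by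
    have : l.length - 1 + 1 = l.length := by omega
    rw [this, List.take_length, hsum]
  rcases key (l.length - 1) hlen with ⟨f, -, hfs, hfe⟩ | ⟨f, -, hfs, hfe⟩
  · exact Or.inl ⟨f, hfs, by rw [← hfull, hfe]⟩
  · exact Or.inr ⟨f, hfs, by rw [← hfull, hfe]⟩

end Aux

/-- if `μ` is dominant and lies in the ℚ-span of the simple coroots indexed by a
proper subset `J` of the simple roots of an irreducible root system, then `μ = 0`. -/
theorem stmt5 {ι : Type*} [Fintype ι] (Φ Φp : Set V) (α : ι → V)
    (hΦ : IsRootSystem Φ) (hpos : IsPositiveSystem Φ Φp)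
    (hbase : IsBase Φ Φp (Set.range α)) (hind : LinearIndependent ℝ α)
    (hirr : RootIsIrreducible Φ)
    (J : Set ι) (hJ : J ≠ Set.univ)
    (μ : V) (hdom : ∀ i, 0 ≤ ⟪μ, α i⟫)
    (c : ι → ℚ) (hc : ∀ i, i ∉ J → c i = 0)
    (hμ : μ = ∑ i, (c i : ℝ) • coro (α i)) :
    μ = 0 := by
  classical
  have hmem : ∀ k, α k ∈ Φ := fun k => hpos.subset (hbase.subset ⟨k, rfl⟩)
  have hself : ∀ k : ι, (0:ℝ) < ⟪α k, α k⟫ := fun k => inner_self_pos' (hΦ.ne_zero _ (hmem k))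
  set e : ι → ℝ := fun i => (c i : ℝ) * (2 / ⟪α i, α i⟫) with he
  have hμ' : μ = ∑ i, e i • α i := by
    rw [hμ]; exact Finset.sum_congr rfl fun i _ => by rw [coro, smul_smul]
  have hfac : ∀ i : ι, (0:ℝ) < 2 / ⟪α i, α i⟫ := fun i => by have := hself i; positivity
  have hnp : ∀ i j : ι, i ≠ j → ⟪α i, α j⟫ ≤ 0 := fun i j h => inner_nonpos hΦ hpos hbase hind h
  -- Step 1: all coefficients are nonnegative
  have hnonneg : ∀ i, 0 ≤ e i := by
    by_contra hcon
    push_neg at hcon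
    set N : Finset ι := Finset.univ.filter (fun i => e i < 0) with hN
    have hNne : N.Nonempty := by
      obtain ⟨i, hi⟩ := hcon; exact ⟨i, by simp [hN, hi]⟩
    set y : V := ∑ i ∈ N, (-e i) • α i with hy
    have hyneg : y = -∑ i ∈ N, e i • α i := by
      rw [hy, ← Finset.sum_neg_distrib]; simp [neg_smul]
    have hμy : μ = (∑ i ∈ Nᶜ, e i • α i) - y := by
      rw [hμ', ← Finset.sum_compl_add_sum N fun i => e i • α i, hyneg]
      abel
    have h1 : 0 ≤ ⟪μ, y⟫ := by
      rw [hy, inner_sum]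
      refine Finset.sum_nonneg fun j hj => ?_
      rw [real_inner_smul_right]
      have hje : e j < 0 := (Finset.mem_filter.mp hj).2
      have := hdom j
      nlinarith
    have h2 : ⟪∑ i ∈ Nᶜ, e i • α i, y⟫ ≤ 0 := by
      rw [sum_inner]
      refine Finset.sum_nonpos fun i hi => ?_
      have hie : 0 ≤ e i := by
        have : ¬ e i < 0 := by simpa [hN] using (Finset.mem_compl.mp hi)
        linarith
      rw [real_inner_smul_left, hy, inner_sum]
      have hterm : ∀ j ∈ N, ⟪α i, (-e j) • α j⟫ ≤ 0 := by
        intro j hj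
        have hje : e j < 0 := (Finset.mem_filter.mp hj).2
        have hij : i ≠ j := by
          intro hij; rw [hij] at hie; linarith
        rw [real_inner_smul_right]
        have := hnp i j hij
        nlinarith
      have := Finset.sum_nonpos hterm
      nlinarith
    have h3 : ⟪μ, y⟫ = ⟪∑ i ∈ Nᶜ, e i • α i, y⟫ - ⟪y, y⟫ := by
      rw [hμy, inner_sub_left]
    have hyy : ⟪y, y⟫ ≤ 0 := by linarith
    have hy0 : y = 0 := real_inner_self_nonpos.mp hyy
    obtain ⟨i₁, hi₁⟩ := hNne
    have hyuniv : y = ∑ i, (if e i < 0 then -e i else 0) • α i := by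
      rw [hy, hN, Finset.sum_filter]
      exact Finset.sum_congr rfl fun i _ => by split <;> simp
    have hz : ∑ i, (if e i < 0 then -e i else 0) • α i = ∑ i, (0:ℝ) • α i := by
      rw [← hyuniv, hy0]; simp
    have hall := congrFun (coords_unique hind hz) i₁
    have hi₁e : e i₁ < 0 := (Finset.mem_filter.mp hi₁).2
    rw [if_pos hi₁e] at hall
    simp at hall
    linarith
  -- Step 2: vanishing off the support forces orthogonality of the support
  by_cases hzero : ∀ i, e i = 0
  · rw [hμ']
    exact Finset.sum_eq_zero fun i _ => by rw [hzero i, zero_smul]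
  push_neg at hzero
  obtain ⟨i₀, hi₀⟩ := hzero
  set K : Set ι := {i | e i ≠ 0} with hK
  obtain ⟨k₀, hk₀⟩ := (Set.ne_univ_iff_exists_notMem J).mp hJ
  have hk₀K : k₀ ∉ K := by
    simp only [hK, Set.mem_setOf_eq, not_not, he]
    rw [hc k₀ hk₀]; simp
  have horth : ∀ i ∈ K, ∀ m ∉ K, ⟪α i, α m⟫ = 0 := by
    intro i hi m hm
    have hme : e m = 0 := by by_contra h; exact hm h
    have him : i ≠ m := fun h => hm (h ▸ hi)
    have hterms : ∀ j ∈ Finset.univ, e j * ⟪α j, α m⟫ ≤ 0 := by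
      intro j _
      by_cases hjm : j = m
      · rw [hjm, hme, zero_mul]
      · have := hnp j m hjm
        have := hnonneg j
        nlinarith
    have hsum_eq : ∑ j, e j * ⟪α j, α m⟫ = ⟪μ, α m⟫ := by
      rw [hμ', sum_inner]
      exact Finset.sum_congr rfl fun j _ => by rw [real_inner_smul_left]
    have hge : 0 ≤ ∑ j, e j * ⟪α j, α m⟫ := hsum_eq ▸ hdom m
    have hle : ∑ j, e j * ⟪α j, α m⟫ ≤ 0 := Finset.sum_nonpos hterms
    have h0 : ∑ j, e j * ⟪α j, α m⟫ = 0 := le_antisymm hle hge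
    have := (Finset.sum_eq_zero_iff_of_nonpos hterms).mp h0 i (Finset.mem_univ i)
    have hie : e i ≠ 0 := hi
    exact (mul_eq_zero.mp this).resolve_left hie
  -- Step 3: contradict irreducibility
  exfalso
  set s : Set V := {v ∈ Φ | ∃ f : ι → ℝ, (∀ i ∉ K, f i = 0) ∧ v = ∑ i, f i • α i} with hs
  set t : Set V := {v ∈ Φ | ∃ f : ι → ℝ, (∀ i ∈ K, f i = 0) ∧ v = ∑ i, f i • α i} with ht
  have hcover : Φ = s ∪ t := by
    apply Set.Subset.antisymm
    · intro v hv
      by_cases hvp : v ∈ Φp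
      · rcases supp_dichotomy hΦ hpos hbase hind K horth hvp with ⟨f, hf, hfe⟩ | ⟨f, hf, hfe⟩
        · exact Or.inl ⟨hv, f, hf, hfe⟩
        · exact Or.inr ⟨hv, f, hf, hfe⟩
      · have hneg : -v ∈ Φp := by have := hpos.neg_xor v hv; tauto
        have hveq : ∀ f : ι → ℝ, -v = ∑ i, f i • α i → v = ∑ i, (-f i) • α i := by
          intro f hf
          have : v = -∑ i, f i • α i := by rw [← hf]; simp
          rw [this, ← Finset.sum_neg_distrib]
          simp [neg_smul]
        rcases supp_dichotomy hΦ hpos hbase hind K horth hneg with ⟨f, hf, hfe⟩ | ⟨f, hf, hfe⟩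
        · exact Or.inl ⟨hv, fun i => -f i, fun i hi => by simp [hf i hi], hveq f hfe⟩
        · exact Or.inr ⟨hv, fun i => -f i, fun i hi => by simp [hf i hi], hveq f hfe⟩
    · intro v hv
      rcases hv with ⟨h, -⟩ | ⟨h, -⟩ <;> exact h
  have horth2 : ∀ a ∈ s, ∀ b ∈ t, ⟪a, b⟫ = 0 := by
    rintro a ⟨-, f, hf, rfl⟩ b ⟨-, g, hg, rfl⟩
    rw [sum_inner]
    refine Finset.sum_eq_zero fun i _ => ?_
    rw [real_inner_smul_left]
    by_cases hiK : i ∈ K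
    · rw [inner_sum]
      have : ∀ j ∈ Finset.univ, ⟪α i, g j • α j⟫ = 0 := by
        intro j _
        by_cases hjK : j ∈ K
        · rw [hg j hjK]; simp
        · rw [real_inner_smul_right, horth i hiK j hjK, mul_zero]
      rw [Finset.sum_eq_zero this, mul_zero]
    · rw [hf i hiK, zero_mul]
  have hsne : α i₀ ∈ s := by
    refine ⟨hmem i₀, fun i => if i = i₀ then 1 else 0, ?_, ?_⟩
    · intro i hi
      have : i ≠ i₀ := fun h => hi (h ▸ (hi₀ : e i₀ ≠ 0))
      simp [this]
    · rw [sum_ite_coeff, one_smul]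
  have htne : α k₀ ∈ t := by
    refine ⟨hmem k₀, fun i => if i = k₀ then 1 else 0, ?_, ?_⟩
    · intro i hi
      have : i ≠ k₀ := fun h => hk₀K (h ▸ hi)
      simp [this]
    · rw [sum_ite_coeff, one_smul]
  rcases hirr.2 s t hcover horth2 with h | h
  · rw [h] at hsne; exact hsne
  · rw [h] at htne; exact htne
end
end
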